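/- Suppose the probability of a tie in any nearest neighbor search is zero, and let n → ∞ with K_n → ∞ and K_n/n → 0. Then for every τ ≤ T, E[Σ_{i^τ,t^τ} Σ_{j^τ,s^τ : |[i^τ,j^τ]| = 2τ+2} V_{n,i^τ,t^τ}(D_{i^τ,t^τ}) · |V_{n,j^τ,s^τ}(D_{j^τ,s^τ}) − V_{n,j^τ,s^τ}(D_{(i^τ,j^τ),(t^τ,s^τ)})|] → 0, where D_{(i^τ,j^τ),(t^τ,s^τ)} is the data set with both sets of continuation replacements applied. -/

import Mathlib

open MeasureTheory ProbabilityTheory Filter Finset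

noncomputable section

namespace KNNRPaper

attribute [local instance] Classical.propDecidable

/-- The state-action space `S = 𝒳 × 𝒰` for `𝒳 ⊆ ℝ^{d₁}` and `𝒰 ⊆ ℝ^{d₂}`. -/
abbrev SP {d₁ d₂ : ℕ} (𝓧 : Set (EuclideanSpace ℝ (Fin d₁)))
    (𝓤 : Set (EuclideanSpace ℝ (Fin d₂))) : Type := (↥𝓧) × (↥𝓤)

/-- Index of the independent sources of randomness in the model:
episode generating random functions `α_{i,t}`, episode reward noises `ε_{i,t}`,
episode initial conditions `(X_{i,0},U_{i,0})`, fresh regeneration functions `α̃_{i,t}`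
(used for the perturbed data sets `D_{i,t}`), the counterfactual noise `(α'_t, ε'_t)` and
initial state `X̂₀`, the resampled initial states `X̃_j`, and the uniformly resampled
nearest-neighbor ranks `𝒦_{n,j,t}`. -/
inductive Src : Type
  | alpha (i t : ℕ)
  | eps (i t : ℕ)
  | init (i : ℕ)
  | regen (i t : ℕ)
  | cfalpha (t : ℕ)
  | cfeps (t : ℕ)
  | cfinit
  | query (j : ℕ)
  | resample (n j t : ℕ)

variable {d₁ d₂ : ℕ}

/-- The value space of each source of randomness. -/
def SrcType (𝓧 : Set (EuclideanSpace ℝ (Fin d₁))) (𝓤 : Set (EuclideanSpace ℝ (Fin d₂))) :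
    Src → Type
  | .alpha _ _ => SP 𝓧 𝓤 → SP 𝓧 𝓤
  | .eps _ _ => ℝ
  | .init _ => SP 𝓧 𝓤
  | .regen _ _ => SP 𝓧 𝓤 → SP 𝓧 𝓤
  | .cfalpha _ => SP 𝓧 𝓤 → SP 𝓧 𝓤
  | .cfeps _ => ℝ
  | .cfinit => ↥𝓧
  | .query _ => ↥𝓧
  | .resample _ _ _ => ℕ

/-- The measurable structure on the value space of each source of randomness, where `mΓ`
is the σ-algebra on the space of transition functions. -/
def srcMS (𝓧 : Set (EuclideanSpace ℝ (Fin d₁))) (𝓤 : Set (EuclideanSpace ℝ (Fin d₂)))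
    (mΓ : MeasurableSpace (SP 𝓧 𝓤 → SP 𝓧 𝓤)) :
    ∀ s : Src, MeasurableSpace (SrcType 𝓧 𝓤 s)
  | .alpha _ _ => mΓ
  | .eps _ _ => (inferInstance : MeasurableSpace ℝ)
  | .init _ => (inferInstance : MeasurableSpace (SP 𝓧 𝓤))
  | .regen _ _ => mΓ
  | .cfalpha _ => mΓ
  | .cfeps _ => (inferInstance : MeasurableSpace ℝ)
  | .cfinit => (inferInstance : MeasurableSpace ↥𝓧)
  | .query _ => (inferInstance : MeasurableSpace ↥𝓧)
  | .resample _ _ _ => (inferInstance : MeasurableSpace ℕ)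

/-- The raw data of the off-policy evaluation setting of the paper. -/
structure Data (d₁ d₂ : ℕ) (Ω : Type) [MeasurableSpace Ω] : Type where
  /-- the underlying probability measure -/
  P : Measure Ω
  /-- the state space `𝒳 ⊆ ℝ^{d₁}` -/
  𝓧 : Set (EuclideanSpace ℝ (Fin d₁))
  /-- the action space `𝒰 ⊆ ℝ^{d₂}` -/
  𝓤 : Set (EuclideanSpace ℝ (Fin d₂))
  /-- the metric `d` carried by `S = 𝒳 × 𝒰` -/
  dS : SP 𝓧 𝓤 → SP 𝓧 𝓤 → ℝ
  /-- the (finite) time horizon `T` -/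
  T : ℕ
  /-- the bound `M` on rewards and reward noise -/
  M : ℝ
  /-- the mean reward function `r : S → [-M,M]` -/
  r : SP 𝓧 𝓤 → ℝ
  /-- the uniformly equicontinuous set of transition functions `Γ ⊆ C(S,S)` -/
  Γ : Set (SP 𝓧 𝓤 → SP 𝓧 𝓤)
  /-- a σ-algebra on the transition functions -/
  mΓ : MeasurableSpace (SP 𝓧 𝓤 → SP 𝓧 𝓤)
  /-- `(X_{i,t}, U_{i,t})`: the state-action pair of episode `i` at time `t` -/
  Z : ℕ → ℕ → Ω → SP 𝓧 𝓤
  /-- `ε_{i,t}`: the reward noise of episode `i` at time `t` -/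
  ε : ℕ → ℕ → Ω → ℝ
  /-- `α_{i,t}`: the random transition function generating episode `i` at time `t` -/
  α : ℕ → ℕ → Ω → (SP 𝓧 𝓤 → SP 𝓧 𝓤)
  /-- `α̃_{i,t}`: fresh random transition functions used for regenerated continuations -/
  αregen : ℕ → ℕ → Ω → (SP 𝓧 𝓤 → SP 𝓧 𝓤)
  /-- `α'_t`: the random transition functions of the counterfactual system -/
  αcf : ℕ → Ω → (SP 𝓧 𝓤 → SP 𝓧 𝓤)
  /-- `ε'_t`: the reward noise of the counterfactual system -/
  εcf : ℕ → Ω → ℝ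
  /-- `X̂₀`: the initial state of the counterfactual system -/
  ξ : Ω → ↥𝓧
  /-- `X̃_j`: the resampled initial states, i.i.d. `∼ ν₀` -/
  Xq : ℕ → Ω → ↥𝓧
  /-- `K_n`: the number of nearest neighbors used with a data set of `n` episodes -/
  K : ℕ → ℕ
  /-- `𝒦_{n,j,t}`: the uniformly resampled ranks on `{1,…,K_n}` -/
  𝒦 : ℕ → ℕ → ℕ → Ω → ℕ
  /-- `ν₀`: the (known) initial state distribution -/
  ν₀ : Measure ↥𝓧

variable {Ω : Type} [MeasurableSpace Ω]

/-- All sources of randomness of the model, as one family of random variables. -/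
def Data.srcFun (E : Data d₁ d₂ Ω) : ∀ s : Src, Ω → SrcType E.𝓧 E.𝓤 s
  | .alpha i t => E.α i t
  | .eps i t => E.ε i t
  | .init i => E.Z i 0
  | .regen i t => E.αregen i t
  | .cfalpha t => E.αcf t
  | .cfeps t => E.εcf t
  | .cfinit => E.ξ
  | .query j => E.Xq j
  | .resample n j t => E.𝒦 n j t

/-- The setting of Section 2 of the paper: the data consists of `n` i.i.d. episodes
generated by i.i.d. random functions taking values in a uniformly equicontinuous set
`Γ ⊆ C(S,S)`, with rewards `R_t = r(X_t,U_t) + ε_t`; the counterfactual system uses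
noise with the same law; `X̃_j ∼ ν₀` i.i.d.; the ranks `𝒦_{n,j,t}` are i.i.d. uniform
on `{1,…,K_n}`; and all these sources of randomness are jointly independent. -/
structure Setting (d₁ d₂ : ℕ) (Ω : Type) [MeasurableSpace Ω] extends Data d₁ d₂ Ω : Type where
  probP : IsProbabilityMeasure P
  dS_eq_zero : ∀ p q, dS p q = 0 ↔ p = q
  dS_comm : ∀ p q, dS p q = dS q p
  dS_triangle : ∀ p q s, dS p s ≤ dS p q + dS q s
  Mpos : 0 < M
  /-- `r` takes values in `[-M,M]` -/
  hr_bdd : ∀ p, r p ∈ Set.Icc (-M) M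
  /-- `r` is continuous (w.r.t. the metric `d` on `S`) -/
  hr_cont : ∀ p, ∀ e > 0, ∃ δ > 0, ∀ q, dS p q < δ → |r p - r q| < e
  /-- `Γ` is a uniformly equicontinuous set of functions -/
  hΓ_equicont : ∀ e > 0, ∃ δ > 0, ∀ γ ∈ Γ, ∀ p q, dS p q < δ → dS (γ p) (γ q) < e
  /-- the evaluation map `(γ,x) ↦ γ(x)` is jointly measurable -/
  hΓ_eval : @Measurable ((SP 𝓧 𝓤 → SP 𝓧 𝓤) × SP 𝓧 𝓤) (SP 𝓧 𝓤)
      (@Prod.instMeasurableSpace _ _ mΓ _) _ (fun p => p.1 p.2)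
  hα_mem : ∀ i t ω, α i t ω ∈ Γ
  hαregen_mem : ∀ i t ω, αregen i t ω ∈ Γ
  hαcf_mem : ∀ t ω, αcf t ω ∈ Γ
  /-- the episodes are generated by the random dynamical system:
  `(X_{i,t+1},U_{i,t+1}) = α_{i,t}(X_{i,t},U_{i,t})` -/
  hZ_gen : ∀ i t ω, t < T → Z i (t + 1) ω = α i t ω (Z i t ω)
  hZ_meas : ∀ i t, Measurable (Z i t)
  hε_meas : ∀ i t, Measurable (ε i t)
  hα_meas : ∀ i t, @Measurable Ω _ _ mΓ (α i t)
  hαregen_meas : ∀ i t, @Measurable Ω _ _ mΓ (αregen i t)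
  hαcf_meas : ∀ t, @Measurable Ω _ _ mΓ (αcf t)
  hεcf_meas : ∀ t, Measurable (εcf t)
  hξ_meas : Measurable ξ
  hXq_meas : ∀ j, Measurable (Xq j)
  h𝒦_meas : ∀ n j t, Measurable (𝒦 n j t)
  /-- all the sources of randomness are jointly independent -/
  hIndep : iIndepFun (m := srcMS 𝓧 𝓤 mΓ) toData.srcFun P
  /-- the random transition functions are identically distributed -/
  hα_ident : ∀ i t, @Measure.map Ω _ _ mΓ (α i t) P = @Measure.map Ω _ _ mΓ (α 0 0) P
  hαregen_ident : ∀ i t, @Measure.map Ω _ _ mΓ (αregen i t) P = @Measure.map Ω _ _ mΓ (α 0 0) P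
  hαcf_ident : ∀ t, @Measure.map Ω _ _ mΓ (αcf t) P = @Measure.map Ω _ _ mΓ (α 0 0) P
  /-- the reward noises are identically distributed -/
  hε_ident : ∀ i t, P.map (ε i t) = P.map (ε 0 0)
  hεcf_ident : ∀ t, P.map (εcf t) = P.map (ε 0 0)
  /-- the initial conditions of the episodes are identically distributed -/
  hinit_ident : ∀ i, P.map (Z i 0) = P.map (Z 0 0)
  /-- `ν₀` is the law of `X_{i,0}` -/
  hν₀ : P.map (fun ω => (Z 0 0 ω).1) = ν₀
  hξ_law : P.map ξ = ν₀
  hXq_law : ∀ j, P.map (Xq j) = ν₀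
  /-- the reward noise is supported on `[-M,M]` and centered -/
  hε_bdd : ∀ i t ω, ε i t ω ∈ Set.Icc (-M) M
  hε_mean : ∀ i t, ∫ ω, ε i t ω ∂P = 0
  hεcf_bdd : ∀ t ω, εcf t ω ∈ Set.Icc (-M) M
  hεcf_mean : ∀ t, ∫ ω, εcf t ω ∂P = 0
  hK_pos : ∀ n, 1 ≤ K n
  /-- the resampled ranks are uniformly distributed on `{1,…,K_n}` -/
  h𝒦_mem : ∀ n j t ω, 𝒦 n j t ω ∈ Finset.Icc 1 (K n)
  h𝒦_unif : ∀ n j t k, k ∈ Finset.Icc 1 (K n) → P (𝒦 n j t ⁻¹' {k}) = ((K n : ENNReal))⁻¹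

namespace Setting

variable (E : Setting d₁ d₂ Ω)

/-- The reward `R_{i,t} = r(X_{i,t},U_{i,t}) + ε_{i,t}`. -/
def Rw (i t : ℕ) (ω : Ω) : ℝ := E.r (E.Z i t ω) + E.ε i t ω

/-- The index set of the data set `D` with `n` episodes: pairs `(i,t)` with
`i < n`, `t < T` (`0`-based). -/
def idxSet (n : ℕ) : Finset (ℕ × ℕ) := Finset.range n ×ˢ Finset.range E.T

/-- The (original) data set `D`, as a map `(i,t,ω) ↦ (X_{i,t},U_{i,t})(ω)`. -/
def origData : ℕ → ℕ → Ω → SP E.𝓧 E.𝓤 := fun i t => E.Z i t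

/-- `s`-fold composition of the fresh regeneration functions of episode `i` starting at
time `t`: `α̃_{i,t+s-1} ∘ ⋯ ∘ α̃_{i,t}`. -/
def regenIter (i t : ℕ) : ℕ → Ω → SP E.𝓧 E.𝓤 → SP E.𝓧 E.𝓤
  | 0 => fun _ p => p
  | s + 1 => fun ω p => E.αregen i (t + s) ω (regenIter i t s ω p)

/-- The perturbed data set obtained from `D` by recursively (head of the list applied
last, i.e. outermost) replacing, for each `(i,t)` in the list, the continuation of episode
`i` after time `t` by an independently regenerated continuation started from the current
sample at `(i,t)`. -/
def perturb : List (ℕ × ℕ) → ℕ → ℕ → Ω → SP E.𝓧 E.𝓤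
  | [] => fun i t ω => E.Z i t ω
  | (a, b) :: L => fun i t ω =>
      if i = a ∧ b < t then E.regenIter a b (t - b) ω (perturb L a b ω)
      else perturb L i t ω

/-- The list of replacement points corresponding to a multi-index `(i^τ,t^τ)`. -/
def replList {τ : ℕ} (idx : Fin (τ + 1) → ℕ × ℕ) : List (ℕ × ℕ) :=
  (List.finRange (τ + 1)).map idx

/-- The number of data points of the data set (of `n` episodes) strictly closer to the
query `q` than the data point with index `p`. -/
def closerCard (n : ℕ) (data : ℕ → ℕ → SP E.𝓧 E.𝓤) (q : SP E.𝓧 E.𝓤) (p : ℕ × ℕ) : ℕ :=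
  ((E.idxSet n).filter fun p' => E.dS q (data p'.1 p'.2) < E.dS q (data p.1 p.2)).card

/-- `(X_{i,t},U_{i,t})` is a `K`-nearest neighbor of the query `q` in the data set:
its rank in the ordering by increasing distance to `q` is at most `K`. -/
def isKNN (n K : ℕ) (data : ℕ → ℕ → SP E.𝓧 E.𝓤) (q : SP E.𝓧 E.𝓤) (p : ℕ × ℕ) : Prop :=
  p ∈ E.idxSet n ∧ E.closerCard n data q p < K

/-- The `k`-th nearest neighbor (exact rank `k`) of the query `q` in the data set
(well defined under the no-ties assumption). -/
def kthNN (n : ℕ) (data : ℕ → ℕ → SP E.𝓧 E.𝓤) (q : SP E.𝓧 E.𝓤) (k : ℕ) : ℕ × ℕ :=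
  if h : ∃ p ∈ E.idxSet n, E.closerCard n data q p + 1 = k then h.choose else (0, 0)

/-- The query of step `st` of a nearest neighbor path whose previous sample has index `p`:
`(X_{i,t+1}, u_{st}(X_{i,t+1}))`. -/
def nextQuery (u : ℕ → ↥E.𝓧 → ↥E.𝓤) (data : ℕ → ℕ → SP E.𝓧 E.𝓤) (st : ℕ) (p : ℕ × ℕ) :
    SP E.𝓧 E.𝓤 :=
  ((data p.1 (p.2 + 1)).1, u st (data p.1 (p.2 + 1)).1)

/-- `(i^τ,t^τ)` is a `K`-NN path of length `τ` starting at `x₀` under the policy `u`: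
each step-`q` sample is a `K`-nearest neighbor of the corresponding query. -/
def isNNPath (n K : ℕ) (u : ℕ → ↥E.𝓧 → ↥E.𝓤) (data : ℕ → ℕ → SP E.𝓧 E.𝓤) (x₀ : ↥E.𝓧)
    (τ : ℕ) (idx : Fin (τ + 1) → ℕ × ℕ) : Prop :=
  E.isKNN n K data (x₀, u 0 x₀) (idx 0) ∧
    ∀ q : Fin τ, E.isKNN n K data (E.nextQuery u data ((q : ℕ) + 1) (idx q.castSucc)) (idx q.succ)

/-- The `K_n`-NN path weight
`V_{n,i^τ,t^τ}(D̃) = K_n^{-(τ+1)} 1{(i^τ,t^τ) is a K_n-NN path starting at X̃₁ under u in D̃}`. -/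
def V (n K : ℕ) (u : ℕ → ↥E.𝓧 → ↥E.𝓤) (data : ℕ → ℕ → Ω → SP E.𝓧 E.𝓤) (τ : ℕ)
    (idx : Fin (τ + 1) → ℕ × ℕ) (ω : Ω) : ℝ :=
  if E.isNNPath n K u (fun i t => data i t ω) (E.Xq 0 ω) τ idx then ((K : ℝ))⁻¹ ^ (τ + 1) else 0

/-- The path of data indices selected by the rank sequence `ks`: the step-`0` sample is the
`ks 0`-th nearest neighbor of `(x₀,u₀(x₀))` and the step-`(q+1)` sample is the `ks (q+1)`-th
nearest neighbor of the query built from the step-`q` sample. -/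
def rankPath (n : ℕ) (u : ℕ → ↥E.𝓧 → ↥E.𝓤) (data : ℕ → ℕ → SP E.𝓧 E.𝓤) (x₀ : ↥E.𝓧)
    (ks : ℕ → ℕ) : ℕ → ℕ × ℕ
  | 0 => E.kthNN n data (x₀, u 0 x₀) (ks 0)
  | τ + 1 => E.kthNN n data (E.nextQuery u data (τ + 1) (rankPath n u data x₀ ks τ)) (ks (τ + 1))

/-- `R_τ^{k^τ}(x₀;u)(ω)`: the reward of the step-`τ` sample of the nearest neighbor path
selected by the rank sequence `ks`. -/
def pathReward (n : ℕ) (u : ℕ → ↥E.𝓧 → ↥E.𝓤) (x₀ : ↥E.𝓧) (ks : ℕ → ℕ) (τ : ℕ) (ω : Ω) : ℝ :=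
  E.Rw (E.rankPath n u (fun i t => E.Z i t ω) x₀ ks τ).1
    (E.rankPath n u (fun i t => E.Z i t ω) x₀ ks τ).2 ω

/-- The KNNR estimator `m^{KNNR}_{l,n}(u)`. -/
def knnrEst (n l : ℕ) (u : ℕ → ↥E.𝓧 → ↥E.𝓤) (ω : Ω) : ℝ :=
  ∑ τ ∈ Finset.range (E.T + 1), (l : ℝ)⁻¹ *
    ∑ j ∈ Finset.range l, E.pathReward n u (E.Xq j ω) (fun t => E.𝒦 n j t ω) τ ω

/-- The `K_n`-NN path regression estimator `m^{NN}_{l,n}(u)`. -/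
def nnEst (n l : ℕ) (u : ℕ → ↥E.𝓧 → ↥E.𝓤) (ω : Ω) : ℝ :=
  ∑ τ ∈ Finset.range (E.T + 1), (l : ℝ)⁻¹ *
    ∑ j ∈ Finset.range l,
      ∑ ks ∈ Fintype.piFinset (fun _ : Fin (τ + 1) => Finset.Icc 1 (E.K n)),
        ((E.K n : ℝ))⁻¹ ^ (τ + 1) *
          E.pathReward n u (E.Xq j ω)
            (fun t => if h : t < τ + 1 then ks ⟨t, h⟩ else 1) τ ω

/-- The counterfactual state process `X̂_t`:
`X̂₀ ∼ ν₀` and `X̂_{t+1} = Π(α'_t(X̂_t, u_t(X̂_t)))`. -/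
def cfX (u : ℕ → ↥E.𝓧 → ↥E.𝓤) (ω : Ω) : ℕ → ↥E.𝓧
  | 0 => E.ξ ω
  | t + 1 => (E.αcf t ω (cfX u ω t, u t (cfX u ω t))).1

/-- The value `m(u) = E[Σ_{t=0}^T R_t|_u]` of the policy `u`. -/
def value (u : ℕ → ↥E.𝓧 → ↥E.𝓤) : ℝ :=
  ∫ ω, (∑ t ∈ Finset.range (E.T + 1),
    (E.r (E.cfX u ω t, u t (E.cfX u ω t)) + E.εcf t ω)) ∂E.P

/-- `x` lies in the support of a measure on `𝒳`. -/
def memSuppX (μ : Measure ↥E.𝓧) (x : ↥E.𝓧) : Prop := ∀ e > 0, 0 < μ (Metric.ball x e)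

/-- `p` lies in the support of a measure on `S` (w.r.t. the metric `d`). -/
def memSuppS (μ : Measure (SP E.𝓧 E.𝓤)) (p : SP E.𝓧 E.𝓤) : Prop :=
  ∀ e > 0, 0 < μ {q | E.dS p q < e}

/-- `π_t|_x`: the law of `X_t`. -/
def lawX (t : ℕ) : Measure ↥E.𝓧 := E.P.map (fun ω => (E.Z 0 t ω).1)

/-- `π_t`: the law of `(X_t,U_t)`. -/
def lawS (t : ℕ) : Measure (SP E.𝓧 E.𝓤) := E.P.map (E.Z 0 t)

/-- Assumption 1.2 (coverage): for all `t` and all `x ∈ supp(π_t|_x)` there is `t̃ < T-1`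
with `(x,u_t(x)) ∈ supp(π_{t̃})`. -/
def Coverage (u : ℕ → ↥E.𝓧 → ↥E.𝓤) : Prop :=
  ∀ t ≤ E.T, ∀ x : ↥E.𝓧, E.memSuppX (E.lawX t) x →
    ∃ t', t' + 1 < E.T ∧ E.memSuppS (E.lawS t') (x, u t x)

/-- All distances from the query `q` to the data points of the data set of `n` episodes
are pairwise distinct (no ties occur in the nearest neighbor search for `q`). -/
def noTiesFor (n : ℕ) (data : ℕ → ℕ → SP E.𝓧 E.𝓤) (q : SP E.𝓧 E.𝓤) : Prop :=
  ∀ p₁ ∈ E.idxSet n, ∀ p₂ ∈ E.idxSet n,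
    E.dS q (data p₁.1 p₁.2) = E.dS q (data p₂.1 p₂.2) → p₁ = p₂

/-- Assumption 1.1: the probability of a tie occurring in any nearest neighbor search
(for any data set size, any (possibly perturbed) data set, and any query arising in the
algorithm) is zero. -/
def NoTies (u : ℕ → ↥E.𝓧 → ↥E.𝓤) : Prop :=
  ∀ n : ℕ, ∀ x₀ : ↥E.𝓧, ∀ᵐ ω ∂E.P, ∀ L L' : List (ℕ × ℕ),
    E.noTiesFor n (fun i t => E.perturb L i t ω) (x₀, u 0 x₀) ∧
    (∀ j, E.noTiesFor n (fun i t => E.perturb L i t ω) (E.Xq j ω, u 0 (E.Xq j ω))) ∧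
    (∀ p ∈ E.idxSet n, ∀ st ≤ E.T,
      E.noTiesFor n (fun i t => E.perturb L i t ω)
        (E.nextQuery u (fun i t => E.perturb L' i t ω) st p))

/-- `|i^τ|`: number of distinct episode indices of a multi-index. -/
def distinctEp {τ : ℕ} (idx : Fin (τ + 1) → ℕ × ℕ) : ℕ :=
  (Finset.univ.image fun q => (idx q).1).card

/-- `|[i^τ,j^τ]|`: number of distinct episode indices of two multi-indices together. -/
def distinctEp₂ {τ : ℕ} (idx jdx : Fin (τ + 1) → ℕ × ℕ) : ℕ :=
  ((Finset.univ.image fun q => (idx q).1) ∪ (Finset.univ.image fun q => (jdx q).1)).card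

end Setting

end KNNRPaper

/-!
The sum is bounded pointwise, almost surely, by `O(1/K_n)`. Put `c = 2(τ+1)T`. The
perturbations in the sum regenerate at most `2τ+2` episodes, so they change at most `c` samples
of `D` and hence the rank of a fixed sample for a fixed query by at most `c`. Along a nearest
neighbor path in `D_L` whose samples lie in `L`, every query is built from the regenerated
successor of the previous sample and so does not depend on `L`. Therefore a multi-index with
`V_{n,i^τ,t^τ}(D_{i^τ,t^τ}) ≠ 0` is a chain of `(K_n+c)`-nearest neighbors in `D`, and one
with `V_{n,j^τ,s^τ}(D_{j^τ,s^τ}) ≠ V_{n,j^τ,s^τ}(D_{(i^τ,j^τ),(t^τ,s^τ)})` is such a chain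
whose rank at some step lies in `[K_n-c, K_n+c)`. Without ties the rank is injective, so there
are at most `(K_n+c)^{τ+1}` chains of the first kind and `(τ+1)·2c·(K_n+c)^τ` of the second,
and the sum is at most `K_n^{-2(τ+1)}` times the product of these counts.
-/

namespace KNNRPaper

attribute [local instance] Classical.propDecidable

section Chains

variable {α : Type*}

def IsChainFrom (P : ℕ → α → α → Prop) (a₀ : α) {τ : ℕ} (idx : Fin (τ + 1) → α) : Prop :=
  P 0 a₀ (idx 0) ∧ ∀ q : Fin τ, P (q + 1) (idx q.castSucc) (idx q.succ)

variable {P Q : ℕ → α → α → Prop} {a₀ : α} {τ : ℕ} {idx : Fin (τ + 1) → α}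

theorem IsChainFrom.imp {s : Set α} (hs : ∀ q, idx q ∈ s)
    (hPQ : ∀ st prev, ∀ p ∈ s, P st prev p → Q st prev p) (h : IsChainFrom P a₀ idx) :
    IsChainFrom Q a₀ idx :=
  ⟨hPQ _ _ _ (hs 0) h.1, fun q => hPQ _ _ _ (hs _) (h.2 q)⟩

theorem IsChainFrom.exists_step_not (hP : IsChainFrom P a₀ idx) (hQ : ¬IsChainFrom Q a₀ idx) :
    ∃ qs ≤ τ, IsChainFrom (fun st prev p => P st prev p ∧ (st = qs → ¬Q st prev p)) a₀ idx := by
  simp only [IsChainFrom, not_and_or, not_forall] at hQ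
  rcases hQ with h0 | ⟨q₀, hq₀⟩
  · exact ⟨0, Nat.zero_le _, ⟨hP.1, fun _ => h0⟩, fun q => ⟨hP.2 q, fun h => by omega⟩⟩
  · refine ⟨q₀ + 1, q₀.isLt, ⟨hP.1, fun h => by omega⟩, fun q => ⟨hP.2 q, fun h => ?_⟩⟩
    obtain rfl : q = q₀ := Fin.ext (by omega)
    exact hq₀

theorem IsChainFrom.init {idx : Fin (τ + 2) → α} (h : IsChainFrom P a₀ idx) :
    IsChainFrom P a₀ (Fin.init idx) :=
  ⟨h.1, fun q => by
    have := h.2 q.castSucc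
    rwa [Fin.val_castSucc, Fin.succ_castSucc] at this⟩

variable (S : Finset α)

theorem card_isChainFrom_le (m : ℕ → ℕ) :
    ∀ τ, #(S.filter (P 0 a₀)) ≤ m 0 →
      (∀ st ∈ Icc 1 τ, ∀ prev ∈ S, #(S.filter (P st prev)) ≤ m st) →
      #((Fintype.piFinset fun _ : Fin (τ + 1) => S).filter (IsChainFrom P a₀)) ≤
        ∏ st ∈ range (τ + 1), m st
  | 0, h0, _ => by
    rw [prod_range_one]
    refine (card_le_card_of_injOn (fun idx => idx 0) (fun idx hidx => ?_)
      fun f _ g _ h => ?_).trans h0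
    · simp only [coe_filter, Fintype.mem_piFinset, Set.mem_ofPred_eq] at hidx
      exact mem_filter.mpr ⟨hidx.1 0, hidx.2.1⟩
    · funext q
      rwa [Fin.fin_one_eq_zero q]
  | τ + 1, h0, hstep => by
    rw [prod_range_succ, mul_comm]
    refine (card_le_mul_card_image_of_maps_to (f := Fin.init) (fun idx hidx => ?_) _
      fun y hy => ?_).trans (Nat.mul_le_mul_left _ (card_isChainFrom_le m τ h0
        fun st hst => hstep st (by simp only [mem_Icc] at hst ⊢; omega)))
    · simp only [mem_filter, Fintype.mem_piFinset] at hidx ⊢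
      exact ⟨fun q => hidx.1 _, hidx.2.init⟩
    · have hyS : y (Fin.last τ) ∈ S := Fintype.mem_piFinset.mp (mem_filter.mp hy).1 _
      refine (card_le_card_of_injOn (fun idx : Fin (τ + 2) → α => idx (Fin.last _))
        (fun idx hidx => ?_) fun f hf g hg h => ?_).trans (hstep (τ + 1) (by simp) _ hyS)
      · simp only [coe_filter, mem_filter, Fintype.mem_piFinset, Set.mem_ofPred_eq] at hidx
        obtain ⟨⟨hS, hchain⟩, rfl⟩ := hidx
        refine mem_filter.mpr ⟨hS _, ?_⟩
        simpa [Fin.init] using hchain.2 (Fin.last τ)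
      · simp only [coe_filter, mem_filter, Set.mem_ofPred_eq] at hf hg
        rw [← Fin.snoc_init_self f, ← Fin.snoc_init_self g, hf.2, hg.2]
        exact congrArg _ h

variable (rk : ℕ → α → α → ℕ)

theorem card_isChainFrom_rank_le
    (h0 : Set.InjOn (rk 0 a₀) S) (hstep : ∀ st ∈ Icc 1 τ, ∀ prev ∈ S, Set.InjOn (rk st prev) S)
    (R : ℕ → ℕ → Prop) (s : ℕ → Finset ℕ) (hs : ∀ st k, R st k → k ∈ s st) :
    #((Fintype.piFinset fun _ : Fin (τ + 1) => S).filter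
        (IsChainFrom (fun st prev p => R st (rk st prev p)) a₀)) ≤
      ∏ st ∈ range (τ + 1), #(s st) := by
  have hcount : ∀ st prev, Set.InjOn (rk st prev) S →
      #(S.filter fun p => R st (rk st prev p)) ≤ #(s st) := fun st prev hinj =>
    card_le_card_of_injOn (rk st prev) (fun p hp => hs st _ (mem_filter.mp hp).2)
      (hinj.mono fun p hp => (mem_filter.mp hp).1)
  exact card_isChainFrom_le S _ τ (hcount 0 a₀ h0) fun st hst prev hprev =>
    hcount st prev (hstep st hst prev hprev)

theorem card_isChainFrom_rank_lt_le
    (h0 : Set.InjOn (rk 0 a₀) S) (hstep : ∀ st ∈ Icc 1 τ, ∀ prev ∈ S, Set.InjOn (rk st prev) S)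
    (M : ℕ) :
    #((Fintype.piFinset fun _ : Fin (τ + 1) => S).filter
        (IsChainFrom (fun st prev p => rk st prev p < M) a₀)) ≤ M ^ (τ + 1) := by
  simpa using card_isChainFrom_rank_le S rk h0 hstep (fun _ k => k < M) (fun _ => range M)
    fun _ _ => mem_range.mpr

theorem card_isChainFrom_rank_window_le
    (h0 : Set.InjOn (rk 0 a₀) S) (hstep : ∀ st ∈ Icc 1 τ, ∀ prev ∈ S, Set.InjOn (rk st prev) S)
    (K c : ℕ) {qs : ℕ} (hqs : qs ≤ τ) :
    #((Fintype.piFinset fun _ : Fin (τ + 1) => S).filter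
        (IsChainFrom (fun st prev p =>
          rk st prev p < K + c ∧ (st = qs → K ≤ rk st prev p + c)) a₀)) ≤
      2 * c * (K + c) ^ τ := by
  refine (card_isChainFrom_rank_le S rk h0 hstep (fun st k => k < K + c ∧ (st = qs → K ≤ k + c))
    (fun st => if st = qs then Ico (K - c) (K + c) else range (K + c)) fun st k hk => ?_).trans ?_
  · split_ifs with h
    · exact mem_Ico.mpr ⟨by have := hk.2 h; omega, hk.1⟩
    · exact mem_range.mpr hk.1
  · have hmem : qs ∈ range (τ + 1) := mem_range.mpr (by omega)
    rw [← mul_prod_erase _ _ hmem, if_pos rfl,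
      prod_congr rfl fun st hst => by rw [if_neg (ne_of_mem_erase hst)], prod_const,
      card_erase_of_mem hmem, Nat.card_Ico]
    simp only [card_range, Nat.add_sub_cancel]
    exact Nat.mul_le_mul_right _ (by omega)

theorem card_exists_isChainFrom_rank_window_le
    (h0 : Set.InjOn (rk 0 a₀) S) (hstep : ∀ st ∈ Icc 1 τ, ∀ prev ∈ S, Set.InjOn (rk st prev) S)
    (K c : ℕ) :
    #((Fintype.piFinset fun _ : Fin (τ + 1) => S).filter fun idx => ∃ qs ≤ τ,
        IsChainFrom (fun st prev p =>
          rk st prev p < K + c ∧ (st = qs → K ≤ rk st prev p + c)) a₀ idx) ≤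
      (τ + 1) * (2 * c * (K + c) ^ τ) := by
  calc _ ≤ #((range (τ + 1)).biUnion fun qs =>
          (Fintype.piFinset fun _ : Fin (τ + 1) => S).filter (IsChainFrom (fun st prev p =>
            rk st prev p < K + c ∧ (st = qs → K ≤ rk st prev p + c)) a₀)) := by
        refine card_le_card fun idx hidx => ?_
        obtain ⟨hpi, qs, hqs, hchain⟩ := mem_filter.mp hidx
        exact mem_biUnion.mpr ⟨qs, mem_range.mpr (Nat.lt_succ_of_le hqs),
          mem_filter.mpr ⟨hpi, hchain⟩⟩
    _ ≤ ∑ _qs ∈ range (τ + 1), 2 * c * (K + c) ^ τ :=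
        card_biUnion_le.trans (sum_le_sum fun qs hqs => card_isChainFrom_rank_window_le S rk
          h0 hstep K c (Nat.lt_succ_iff.mp (mem_range.mp hqs)))
    _ = _ := by rw [sum_const, card_range, smul_eq_mul]

end Chains

namespace Setting

variable {d₁ d₂ : ℕ} {Ω : Type} [MeasurableSpace Ω] (E : Setting d₁ d₂ Ω)
  {L : List (ℕ × ℕ)} (ω : Ω)

theorem perturb_eq_of_forall_le {i t : ℕ} (h : ∀ b, (i, b) ∈ L → t ≤ b) :
    E.perturb L i t ω = E.Z i t ω := by
  induction L with
  | nil => rfl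
  | cons hd L ih =>
    obtain ⟨a, b⟩ := hd
    simp only [perturb]
    rw [if_neg, ih fun b' hb' => h b' (List.mem_cons_of_mem _ hb')]
    rintro ⟨rfl, hbt⟩
    exact absurd (h b List.mem_cons_self) (by omega)

theorem perturb_self (hN : (L.map Prod.fst).Nodup) {p : ℕ × ℕ} (hp : p ∈ L) :
    E.perturb L p.1 p.2 ω = E.Z p.1 p.2 ω :=
  E.perturb_eq_of_forall_le ω fun _ hb =>
    (congrArg Prod.snd (List.inj_on_of_nodup_map hN hb hp rfl)).ge

theorem perturb_succ (hN : (L.map Prod.fst).Nodup) {p : ℕ × ℕ} (hp : p ∈ L) :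
    E.perturb L p.1 (p.2 + 1) ω = E.αregen p.1 p.2 ω (E.Z p.1 p.2 ω) := by
  induction L with
  | nil => simp at hp
  | cons hd L ih =>
    obtain ⟨a, b⟩ := hd
    rw [List.map_cons, List.nodup_cons] at hN
    simp only [perturb]
    rcases List.mem_cons.mp hp with rfl | hpL
    · rw [if_pos ⟨rfl, Nat.lt_succ_self _⟩, Nat.add_sub_cancel_left]
      simp only [regenIter, add_zero]
      rw [E.perturb_eq_of_forall_le ω fun b' hb' => absurd (List.mem_map_of_mem hb') hN.1]
    · have hpa : p.1 ≠ a := fun h =>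
        hN.1 (h ▸ List.mem_map.mpr ⟨p, hpL, rfl⟩)
      rw [if_neg fun h => hpa h.1, ih hN.2 hpL]

theorem closerCard_lt_closerCard {n : ℕ} {data : ℕ → ℕ → SP E.𝓧 E.𝓤} {q : SP E.𝓧 E.𝓤}
    {p₁ p₂ : ℕ × ℕ} (hp₁ : p₁ ∈ E.idxSet n)
    (hd : E.dS q (data p₁.1 p₁.2) < E.dS q (data p₂.1 p₂.2)) :
    E.closerCard n data q p₁ < E.closerCard n data q p₂ := by
  refine card_lt_card ⟨fun r hr => ?_, fun hsub => ?_⟩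
  · rw [mem_filter] at hr ⊢
    exact ⟨hr.1, hr.2.trans hd⟩
  · exact lt_irrefl _ (mem_filter.mp (hsub (mem_filter.mpr ⟨hp₁, hd⟩))).2

theorem closerCard_injOn {n : ℕ} {data : ℕ → ℕ → SP E.𝓧 E.𝓤} {q : SP E.𝓧 E.𝓤}
    (h : E.noTiesFor n data q) : Set.InjOn (E.closerCard n data q) (E.idxSet n) := by
  intro p₁ hp₁ p₂ hp₂ heq
  by_contra hne
  rcases lt_trichotomy (E.dS q (data p₁.1 p₁.2)) (E.dS q (data p₂.1 p₂.2)) with hd | hd | hd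
  · exact (E.closerCard_lt_closerCard hp₁ hd).ne heq
  · exact hne (h p₁ hp₁ p₂ hp₂ hd)
  · exact (E.closerCard_lt_closerCard hp₂ hd).ne' heq

theorem closerCard_le_add_card {n : ℕ} {data data' : ℕ → ℕ → SP E.𝓧 E.𝓤} {q : SP E.𝓧 E.𝓤}
    {p : ℕ × ℕ} (hp : data p.1 p.2 = data' p.1 p.2) {D : Finset (ℕ × ℕ)}
    (hD : ∀ r ∈ E.idxSet n, r ∉ D → data r.1 r.2 = data' r.1 r.2) :
    E.closerCard n data' q p ≤ E.closerCard n data q p + #D := by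
  refine (card_le_card fun r hr => ?_).trans (card_union_le _ _)
  rw [mem_filter] at hr
  by_cases hrD : r ∈ D
  · exact mem_union_right _ hrD
  · rw [← hp, ← hD r hr.1 hrD] at hr
    exact mem_union_left _ (mem_filter.mpr hr)

/-- The step-`st` query following the sample `prev` is the same in every `D_L` with `prev ∈ L`
(`nextQuery_perturb`); `D_{[prev]}` serves as representative. -/
def pathQuery (u : ℕ → ↥E.𝓧 → ↥E.𝓤) (st : ℕ) (prev : ℕ × ℕ) : SP E.𝓧 E.𝓤 :=
  if st = 0 then (E.Xq 0 ω, u 0 (E.Xq 0 ω))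
  else E.nextQuery u (fun i t => E.perturb [prev] i t ω) st prev

def pathRank (n : ℕ) (u : ℕ → ↥E.𝓧 → ↥E.𝓤) (L : List (ℕ × ℕ)) (st : ℕ) (prev p : ℕ × ℕ) :
    ℕ :=
  E.closerCard n (fun i t => E.perturb L i t ω) (E.pathQuery ω u st prev) p

theorem nextQuery_perturb (u : ℕ → ↥E.𝓧 → ↥E.𝓤) (hN : (L.map Prod.fst).Nodup)
    {p : ℕ × ℕ} (hp : p ∈ L) (st : ℕ) :
    E.nextQuery u (fun i t => E.perturb L i t ω) (st + 1) p = E.pathQuery ω u (st + 1) p := by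
  simp only [pathQuery, nextQuery, if_neg st.succ_ne_zero, E.perturb_succ ω hN hp,
    E.perturb_succ ω (L := [p]) (by simp) (List.mem_singleton_self p)]

theorem isNNPath_perturb_iff (n K : ℕ) (u : ℕ → ↥E.𝓧 → ↥E.𝓤) (hN : (L.map Prod.fst).Nodup)
    {τ : ℕ} {idx : Fin (τ + 1) → ℕ × ℕ} (hS : ∀ q, idx q ∈ E.idxSet n) (hL : ∀ q, idx q ∈ L)
    (a₀ : ℕ × ℕ) :
    E.isNNPath n K u (fun i t => E.perturb L i t ω) (E.Xq 0 ω) τ idx ↔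
      IsChainFrom (fun st prev p => E.pathRank ω n u L st prev p < K) a₀ idx := by
  simp only [isNNPath, isKNN, IsChainFrom, pathRank, hS, true_and,
    E.nextQuery_perturb ω u hN (hL _)]
  rfl

theorem pathRank_le_pathRank_add (n : ℕ) (u : ℕ → ↥E.𝓧 → ↥E.𝓤) (hN : (L.map Prod.fst).Nodup)
    {p : ℕ × ℕ} (hp : p ∈ L) (st : ℕ) (prev : ℕ × ℕ) :
    E.pathRank ω n u L st prev p ≤ E.pathRank ω n u [] st prev p + L.length * E.T ∧
      E.pathRank ω n u [] st prev p ≤ E.pathRank ω n u L st prev p + L.length * E.T := by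
  set D := (L.map Prod.fst).toFinset ×ˢ range E.T
  have hD : #D ≤ L.length * E.T := by
    rw [card_product, card_range]
    exact Nat.mul_le_mul_right _ ((List.toFinset_card_le _).trans (List.length_map _).le)
  have hZ : ∀ r ∈ E.idxSet n, r ∉ D → E.Z r.1 r.2 ω = E.perturb L r.1 r.2 ω := by
    intro r hr hrD
    refine (E.perturb_eq_of_forall_le ω fun b hb => absurd ?_ hrD).symm
    exact mem_product.mpr ⟨List.mem_toFinset.mpr (List.mem_map.mpr ⟨_, hb, rfl⟩),
      (mem_product.mp hr).2⟩
  have hself := E.perturb_self ω hN hp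
  exact ⟨(E.closerCard_le_add_card hself.symm hZ).trans (Nat.add_le_add_left hD _),
    (E.closerCard_le_add_card hself fun r hr hrD => (hZ r hr hrD).symm).trans
      (Nat.add_le_add_left hD _)⟩

theorem length_replList {τ : ℕ} (idx : Fin (τ + 1) → ℕ × ℕ) : (replList idx).length = τ + 1 := by
  simp [replList]

theorem mem_replList {τ : ℕ} (idx : Fin (τ + 1) → ℕ × ℕ) (q : Fin (τ + 1)) :
    idx q ∈ replList idx :=
  List.mem_map.mpr ⟨q, List.mem_finRange q, rfl⟩

theorem nodup_map_fst_replList_append {τ : ℕ} {idx jdx : Fin (τ + 1) → ℕ × ℕ}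
    (h : distinctEp₂ idx jdx = 2 * τ + 2) :
    ((replList idx ++ replList jdx).map Prod.fst).Nodup := by
  have hset : ((replList idx ++ replList jdx).map Prod.fst).toFinset =
      (univ.image fun q => (idx q).1) ∪ univ.image fun q => (jdx q).1 := by
    ext a
    simp [replList]
  refine (Multiset.toFinset_card_eq_card_iff_nodup
    (m := ((replList idx ++ replList jdx).map Prod.fst : Multiset ℕ))).mp ?_
  change #(List.toFinset _) = _
  rw [hset, ← distinctEp₂, h]
  simp [replList]
  ring

variable (n K : ℕ) (u : ℕ → ↥E.𝓧 → ↥E.𝓤) {τ : ℕ} {idx : Fin (τ + 1) → ℕ × ℕ} (a₀ : ℕ × ℕ)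

theorem V_perturb_le (hN : (L.map Prod.fst).Nodup) (hS : ∀ q, idx q ∈ E.idxSet n)
    (hL : ∀ q, idx q ∈ L) {c : ℕ} (hc : L.length * E.T ≤ c) :
    E.V n K u (E.perturb L) τ idx ω ≤
      if IsChainFrom (fun st prev p => E.pathRank ω n u [] st prev p < K + c) a₀ idx
      then (K : ℝ)⁻¹ ^ (τ + 1) else 0 := by
  unfold V
  by_cases hpath : E.isNNPath n K u (fun i t => E.perturb L i t ω) (E.Xq 0 ω) τ idx
  · rw [if_pos hpath, if_pos]
    refine ((E.isNNPath_perturb_iff ω n K u hN hS hL a₀).mp hpath).imp (s := {p | p ∈ L}) hL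
      fun st prev p hp hlt => ?_
    have := (E.pathRank_le_pathRank_add ω n u hN hp st prev).2
    omega
  · rw [if_neg hpath]
    split_ifs <;> positivity

theorem exists_isChainFrom_window_of_isNNPath {La Lb : List (ℕ × ℕ)}
    (hNa : (La.map Prod.fst).Nodup) (hNb : (Lb.map Prod.fst).Nodup)
    (hS : ∀ q, idx q ∈ E.idxSet n) (hLa : ∀ q, idx q ∈ La) (hLb : ∀ q, idx q ∈ Lb) {c : ℕ}
    (hca : La.length * E.T ≤ c) (hcb : Lb.length * E.T ≤ c)
    (ha : E.isNNPath n K u (fun i t => E.perturb La i t ω) (E.Xq 0 ω) τ idx)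
    (hb : ¬E.isNNPath n K u (fun i t => E.perturb Lb i t ω) (E.Xq 0 ω) τ idx) :
    ∃ qs ≤ τ, IsChainFrom (fun st prev p => E.pathRank ω n u [] st prev p < K + c ∧
      (st = qs → K ≤ E.pathRank ω n u [] st prev p + c)) a₀ idx := by
  rw [E.isNNPath_perturb_iff ω n K u hNa hS hLa a₀] at ha
  rw [E.isNNPath_perturb_iff ω n K u hNb hS hLb a₀] at hb
  obtain ⟨qs, hqs, hchain⟩ := ha.exists_step_not hb
  refine ⟨qs, hqs, hchain.imp (s := {p | p ∈ La ∧ p ∈ Lb}) (fun q => ⟨hLa q, hLb q⟩)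
    fun st prev p hp hab => ?_⟩
  have ha' := (E.pathRank_le_pathRank_add ω n u hNa hp.1 st prev).2
  have hb' := (E.pathRank_le_pathRank_add ω n u hNb hp.2 st prev).1
  refine ⟨by omega, fun hst => ?_⟩
  have := hab.2 hst
  omega

theorem abs_sub_V_perturb_le {La Lb : List (ℕ × ℕ)}
    (hNa : (La.map Prod.fst).Nodup) (hNb : (Lb.map Prod.fst).Nodup)
    (hS : ∀ q, idx q ∈ E.idxSet n) (hLa : ∀ q, idx q ∈ La) (hLb : ∀ q, idx q ∈ Lb) {c : ℕ}
    (hca : La.length * E.T ≤ c) (hcb : Lb.length * E.T ≤ c) :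
    |E.V n K u (E.perturb La) τ idx ω - E.V n K u (E.perturb Lb) τ idx ω| ≤
      if ∃ qs ≤ τ, IsChainFrom (fun st prev p => E.pathRank ω n u [] st prev p < K + c ∧
        (st = qs → K ≤ E.pathRank ω n u [] st prev p + c)) a₀ idx
      then (K : ℝ)⁻¹ ^ (τ + 1) else 0 := by
  have hw : (0 : ℝ) ≤ (K : ℝ)⁻¹ ^ (τ + 1) := by positivity
  unfold V
  by_cases ha : E.isNNPath n K u (fun i t => E.perturb La i t ω) (E.Xq 0 ω) τ idx <;>
    by_cases hb : E.isNNPath n K u (fun i t => E.perturb Lb i t ω) (E.Xq 0 ω) τ idx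
  · rw [if_pos ha, if_pos hb, sub_self, abs_zero]
    split_ifs <;> positivity
  · rw [if_pos ha, if_neg hb, if_pos (E.exists_isChainFrom_window_of_isNNPath ω n K u a₀ hNa hNb
      hS hLa hLb hca hcb ha hb), sub_zero, abs_of_nonneg hw]
  · rw [if_neg ha, if_pos hb, if_pos (E.exists_isChainFrom_window_of_isNNPath ω n K u a₀ hNb hNa
      hS hLb hLa hcb hca hb ha), zero_sub, abs_neg, abs_of_nonneg hw]
  · rw [if_neg ha, if_neg hb, sub_self, abs_zero]
    split_ifs <;> positivity

theorem V_nonneg (data : ℕ → ℕ → Ω → SP E.𝓧 E.𝓤) : 0 ≤ E.V n K u data τ idx ω := by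
  unfold V
  split_ifs <;> positivity

theorem ae_noTiesFor_pathQuery (hties : E.NoTies u) :
    ∀ᵐ ω ∂E.P, ∀ st ≤ E.T, ∀ prev, (st = 0 ∨ prev ∈ E.idxSet n) →
      E.noTiesFor n (fun i t => E.Z i t ω) (E.pathQuery ω u st prev) := by
  have := E.probP
  obtain ⟨ω₀⟩ := nonempty_of_isProbabilityMeasure E.P
  filter_upwards [hties n (E.Xq 0 ω₀)] with ω hω st hst prev hprev
  unfold pathQuery
  split_ifs with hst0
  · exact (hω [] []).2.1 0
  · exact (hω [] [prev]).2.2 prev (hprev.resolve_left hst0) st hst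

theorem sum_V_mul_abs_sub_V_mem_Icc
    (hnt : ∀ st ≤ τ, ∀ prev, (st = 0 ∨ prev ∈ E.idxSet n) →
      E.noTiesFor n (fun i t => E.Z i t ω) (E.pathQuery ω u st prev))
    (c : ℕ) (hc : 2 * ((τ + 1) * E.T) ≤ c) :
    ∑ idx ∈ Fintype.piFinset (fun _ : Fin (τ + 1) => E.idxSet n),
        ∑ jdx ∈ (Fintype.piFinset (fun _ : Fin (τ + 1) => E.idxSet n)).filter
            (fun jdx => distinctEp₂ idx jdx = 2 * τ + 2),
          E.V n K u (E.perturb (replList idx)) τ idx ω *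
            |E.V n K u (E.perturb (replList jdx)) τ jdx ω -
              E.V n K u (E.perturb (replList idx ++ replList jdx)) τ jdx ω| ∈
      Set.Icc 0 ((K : ℝ)⁻¹ ^ (τ + 1) * ((K : ℝ) + c) ^ (τ + 1) *
        ((K : ℝ)⁻¹ ^ (τ + 1) * ((τ + 1) * (2 * c) * ((K : ℝ) + c) ^ τ))) := by
  set S := Fintype.piFinset fun _ : Fin (τ + 1) => E.idxSet n
  set w : ℝ := (K : ℝ)⁻¹ ^ (τ + 1)
  set A := IsChainFrom (fun st prev p => E.pathRank ω n u [] st prev p < K + c) (0, 0)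
  set B := fun jdx : Fin (τ + 1) → ℕ × ℕ => ∃ qs ≤ τ, IsChainFrom (fun st prev p =>
    E.pathRank ω n u [] st prev p < K + c ∧ (st = qs → K ≤ E.pathRank ω n u [] st prev p + c))
      (0, 0) jdx
  have hinj0 := E.closerCard_injOn (hnt 0 τ.zero_le (0, 0) (Or.inl rfl))
  have hinj : ∀ st ∈ Icc 1 τ, ∀ prev ∈ E.idxSet n,
      Set.InjOn (E.pathRank ω n u [] st prev) (E.idxSet n) := fun st hst prev hprev =>
    E.closerCard_injOn (hnt st (mem_Icc.mp hst).2 prev (Or.inr hprev))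
  have hA : (#(S.filter A) : ℝ) ≤ ((K : ℝ) + c) ^ (τ + 1) := by
    exact_mod_cast card_isChainFrom_rank_lt_le _ _ hinj0 hinj _
  have hB : (#(S.filter B) : ℝ) ≤ (τ + 1) * (2 * c) * ((K : ℝ) + c) ^ τ := by
    rw [mul_assoc]
    exact_mod_cast card_exists_isChainFrom_rank_window_le _ _ hinj0 hinj K c
  have hterm : ∀ idx ∈ S, ∀ jdx ∈ S.filter (fun jdx => distinctEp₂ idx jdx = 2 * τ + 2),
      E.V n K u (E.perturb (replList idx)) τ idx ω *
          |E.V n K u (E.perturb (replList jdx)) τ jdx ω -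
            E.V n K u (E.perturb (replList idx ++ replList jdx)) τ jdx ω| ≤
        (if A idx then w else 0) * (if B jdx then w else 0) := by
    intro idx hidx jdx hjdx
    obtain ⟨hjdx, hdist⟩ := mem_filter.mp hjdx
    have hN := nodup_map_fst_replList_append hdist
    have hN' : ((replList idx).map Prod.fst ++ (replList jdx).map Prod.fst).Nodup := by
      rwa [← List.map_append]
    refine mul_le_mul (E.V_perturb_le ω n K u (0, 0) hN'.of_append_left
        (Fintype.mem_piFinset.mp hidx) (mem_replList idx) (by rw [length_replList]; omega))
      (E.abs_sub_V_perturb_le ω n K u (0, 0) hN'.of_append_right hN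
        (Fintype.mem_piFinset.mp hjdx) (mem_replList jdx)
        (fun q => List.mem_append_right _ (mem_replList jdx q)) (by rw [length_replList]; omega)
        (by rw [List.length_append, length_replList, length_replList, ← two_mul, mul_assoc]
            exact hc))
      (abs_nonneg _) (by positivity)
  refine ⟨sum_nonneg fun _ _ => sum_nonneg fun _ _ =>
    mul_nonneg (E.V_nonneg ω n K u _) (abs_nonneg _), ?_⟩
  calc _ ≤ ∑ idx ∈ S, ∑ jdx ∈ S, (if A idx then w else 0) * (if B jdx then w else 0) :=
        sum_le_sum fun idx hidx => (sum_le_sum (hterm idx hidx)).trans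
          (sum_le_sum_of_subset_of_nonneg (filter_subset _ _) fun _ _ _ => by positivity)
    _ = w * #(S.filter A) * (w * #(S.filter B)) := by
        rw [← sum_mul_sum, ← sum_filter, ← sum_filter, sum_const, sum_const, nsmul_eq_mul,
          nsmul_eq_mul, mul_comm _ w, mul_comm _ w]
    _ ≤ _ := by gcongr

end Setting

theorem tendsto_inv_pow_mul_add_pow (c a : ℝ) (k : ℕ) :
    Tendsto (fun x : ℝ => x⁻¹ ^ (k + 1) * (x + c) ^ (k + 1) * (x⁻¹ ^ (k + 1) * (a * (x + c) ^ k)))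
      atTop (nhds 0) := by
  have h : Tendsto (fun x : ℝ => 1 + c * x⁻¹) atTop (nhds 1) := by
    simpa using (tendsto_inv_atTop_zero.const_mul c).const_add 1
  have key := (h.pow (k + 1)).mul (((h.pow k).mul tendsto_inv_atTop_zero).const_mul a)
  rw [mul_zero, mul_zero, mul_zero] at key
  refine key.congr' ((eventually_gt_atTop 0).mono fun x hx => ?_)
  have hx' : 1 + c * x⁻¹ = x⁻¹ * (x + c) := by field_simp
  simp only [hx', mul_pow]
  ring

theorem integral_mem_Icc_of_ae_mem_Icc {α : Type*} [MeasurableSpace α] {μ : Measure α}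
    [IsProbabilityMeasure μ] {f : α → ℝ} {C : ℝ} (h : ∀ᵐ x ∂μ, f x ∈ Set.Icc 0 C) :
    ∫ x, f x ∂μ ∈ Set.Icc 0 C :=
  ⟨integral_nonneg_of_ae (h.mono fun _ hx => hx.1),
    (integral_mono_of_nonneg (h.mono fun _ hx => hx.1) (integrable_const C)
      (h.mono fun _ hx => hx.2)).trans_eq (by simp)⟩

theorem sum_V_double_perturbation_tendsto_zero_general {d₁ d₂ : ℕ} {Ω : Type} [MeasurableSpace Ω]
    (E : Setting d₁ d₂ Ω) (u : ℕ → ↥E.𝓧 → ↥E.𝓤)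
    (hties : E.NoTies u) (τ : ℕ) (hτ : τ ≤ E.T)
    (hK : Tendsto E.K atTop atTop) :
    Tendsto (fun n => ∫ ω,
        ∑ idx ∈ Fintype.piFinset (fun _ : Fin (τ + 1) => E.idxSet n),
          ∑ jdx ∈ (Fintype.piFinset (fun _ : Fin (τ + 1) => E.idxSet n)).filter
              (fun jdx => Setting.distinctEp₂ idx jdx = 2 * τ + 2),
            E.V n (E.K n) u (E.perturb (Setting.replList idx)) τ idx ω *
              |E.V n (E.K n) u (E.perturb (Setting.replList jdx)) τ jdx ω -
                E.V n (E.K n) u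
                  (E.perturb (Setting.replList idx ++ Setting.replList jdx)) τ jdx ω| ∂E.P)
      atTop (nhds 0) := by
  have := E.probP
  set c := 2 * ((τ + 1) * E.T)
  have hbound := fun n => integral_mem_Icc_of_ae_mem_Icc <|
    (E.ae_noTiesFor_pathQuery n u hties).mono fun ω hω =>
      E.sum_V_mul_abs_sub_V_mem_Icc ω n (E.K n) u (fun st hst => hω st (hst.trans hτ)) c le_rfl
  exact squeeze_zero (fun n => (hbound n).1) (fun n => (hbound n).2)
    ((tendsto_inv_pow_mul_add_pow c (((τ : ℝ) + 1) * (2 * c)) τ).comp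
      (tendsto_natCast_atTop_atTop.comp hK))

/-- **Proposition 2.3.** Assume the probability of a tie occurring in any nearest neighbor
search is zero, and let `K_n → ∞`, `K_n/n → 0`. Then for every `τ ≤ T`,
`E[Σ_{i^τ,t^τ} Σ_{j^τ,s^τ : |[i^τ,j^τ]| = 2τ+2} V_{n,i^τ,t^τ}(D_{i^τ,t^τ})
  · |V_{n,j^τ,s^τ}(D_{j^τ,s^τ}) − V_{n,j^τ,s^τ}(D_{(i^τ,j^τ),(t^τ,s^τ)})|] → 0`,
where `D_{(i^τ,j^τ),(t^τ,s^τ)}` applies both sets of continuation replacements. -/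
theorem sum_V_double_perturbation_tendsto_zero {d₁ d₂ : ℕ} {Ω : Type} [MeasurableSpace Ω]
    (E : Setting d₁ d₂ Ω) (u : ℕ → ↥E.𝓧 → ↥E.𝓤)
    (hties : E.NoTies u) (τ : ℕ) (hτ : τ ≤ E.T)
    (hK : Tendsto E.K atTop atTop)
    (hKn : Tendsto (fun n => (E.K n : ℝ) / (n : ℝ)) atTop (nhds 0)) :
    Tendsto (fun n => ∫ ω,
        ∑ idx ∈ Fintype.piFinset (fun _ : Fin (τ + 1) => E.idxSet n),
          ∑ jdx ∈ (Fintype.piFinset (fun _ : Fin (τ + 1) => E.idxSet n)).filter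
              (fun jdx => Setting.distinctEp₂ idx jdx = 2 * τ + 2),
            E.V n (E.K n) u (E.perturb (Setting.replList idx)) τ idx ω *
              |E.V n (E.K n) u (E.perturb (Setting.replList jdx)) τ jdx ω -
                E.V n (E.K n) u
                  (E.perturb (Setting.replList idx ++ Setting.replList jdx)) τ jdx ω| ∂E.P)
      atTop (nhds 0) :=
  sum_V_double_perturbation_tendsto_zero_general E u hties τ hτ hK

end KNNRPaper
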